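/- For the star-background network with M ≥ 3 nodes, let κ be the next generation matrix, κ_{ik} = (1/γ)·Σ_{j=1}^{M} β_j φ_{ij} φ_{kj}. Assume 0 < β0 < γ (so R0 = β0/γ < 1) and γ/β0 < ζ < ζcrit. If |φ0 − 1/M| < φ̃, then every eigenvalue of κ has absolute value strictly less than 1; if |φ0 − 1/M| > φ̃ (with φ0 still in (0, 1/(M−1)]), then κ has a real eigenvalue strictly greater than 1. -/

import Mathlib

open Matrix

/-- Flux matrix of the star-background network with `M` nodes: every outer
node is joined to the center (index `M−1`) with flux `φ0`, any two distinct
outer nodes are joined with flux `φ1`, `φ_{ii} = 1 − φ0 − (M−2)φ1` for outer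
`i`, and `φ_{MM} = 1 − (M−1)φ0`. -/
noncomputable def sbFlux (M : ℕ) (φ0 φ1 : ℝ) : Matrix (Fin M) (Fin M) ℝ :=
  Matrix.of fun i k =>
    if i = k then
      (if (i : ℕ) = M - 1 then 1 - ((M : ℝ) - 1) * φ0
       else 1 - φ0 - ((M : ℝ) - 2) * φ1)
    else if (i : ℕ) = M - 1 ∨ (k : ℕ) = M - 1 then φ0 else φ1

/-- Infection rates: `β_i = β0` for outer nodes, `β_M = ζ·β0` at the center. -/
noncomputable def starBeta (M : ℕ) (β0 ζ : ℝ) : Fin M → ℝ :=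
  fun i => if (i : ℕ) = M - 1 then ζ * β0 else β0

/-- Next generation matrix `κ_{ik} = (1/γ)·Σ_j β_j φ_{ij} φ_{kj}`. -/
noncomputable def ngm (M : ℕ) (β : Fin M → ℝ) (γ : ℝ)
    (φ : Matrix (Fin M) (Fin M) ℝ) : Matrix (Fin M) (Fin M) ℝ :=
  Matrix.of fun i k => (1 / γ) * ∑ j, β j * φ i j * φ k j

/-!
`κ = (1/γ) φ diag(β) φᵀ` is invariant under permutations of the outer nodes, so it is a star
matrix (one entry at the centre, one between centre and outer nodes, one on the outer diagonal,
one off it); star matrices are closed under products, which computes `κ`. A star matrix acts by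
`p - q` (outer diagonal minus off-diagonal entry) on vectors vanishing at the centre with zero outer
sum, and by a `2 × 2` block on the span of the centre vector and the outer all-ones vector.
For `κ`, with `r = β0/γ`, the first eigenvalue is `r (1 - φ0 - (M - 1) φ1)² < 1`. The block has
determinant `r² ζ (M φ0 - 1)²`, and its characteristic polynomial takes at `1` the value
`(A₀ - r A₂ (M φ0 - 1)²) / M` with `A₀ = M (1 - r) - r (ζ - 1)`, `A₂ = M ζ (1 - r) - (ζ - 1)`,
so it changes sign exactly at `|φ0 - 1/M| = φ̃ = (1/M) √(A₀ / (r A₂))`. Below the threshold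
Jury's criterion puts both roots in `(-1, 1)`; above it the polynomial is negative at `1`, so it
has a root beyond `1`, an eigenvalue of `κ` because the centre–outer entry is nonzero.
-/

open Finset

section StarMatrix

variable {ι R : Type*} [DecidableEq ι] (c : ι)

def starMatrix (w e f p q : R) : Matrix ι ι R :=
  of fun i k => if i = c then (if k = c then w else e)
    else if k = c then f else if i = k then p else q

variable {c}

theorem starMatrix_transpose (w e f p q : R) :
    (starMatrix c w e f p q)ᵀ = starMatrix c w f e p q := by
  ext i k
  by_cases hi : i = c <;> by_cases hk : k = c <;> by_cases hik : i = k <;>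
    simp_all [starMatrix, eq_comm]

variable [CommRing R]

theorem diagonal_ite_eq_starMatrix (a b : R) :
    diagonal (fun i => if i = c then a else b) = starMatrix c a 0 0 b 0 := by
  ext i k
  by_cases hi : i = c <;> by_cases hk : k = c <;> by_cases hik : i = k <;>
    simp_all [starMatrix]

theorem smul_starMatrix (a w e f p q : R) :
    a • starMatrix c w e f p q = starMatrix c (a * w) (a * e) (a * f) (a * p) (a * q) := by
  ext i k
  simp only [starMatrix, Matrix.smul_apply, of_apply]
  split_ifs <;> rfl

variable [Fintype ι]

theorem starMatrix_mulVec (w e f p q : R) (v : ι → R) (i : ι) :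
    (starMatrix c w e f p q *ᵥ v) i =
      if i = c then w * v c + e * ∑ j ∈ univ.erase c, v j
      else f * v c + q * ∑ j ∈ univ.erase c, v j + (p - q) * v i := by
  rw [mulVec, dotProduct, ← sum_erase_add _ _ (mem_univ c)]
  by_cases hi : i = c
  · have hrow : ∀ j ∈ univ.erase c, starMatrix c w e f p q i j * v j = e * v j := fun j hj => by
      simp [starMatrix, hi, ne_of_mem_erase hj]
    rw [sum_congr rfl hrow, ← mul_sum, if_pos hi]
    simp only [starMatrix, of_apply, if_pos hi, ↓reduceIte]
    ring
  · have hrow : ∀ j ∈ univ.erase c, starMatrix c w e f p q i j * v j =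
        q * v j + if i = j then (p - q) * v j else 0 := fun j hj => by
      by_cases hij : i = j
      · subst hij; simp [starMatrix, hi]; ring
      · simp [starMatrix, hi, ne_of_mem_erase hj, hij]
    rw [sum_congr rfl hrow, sum_add_distrib, ← mul_sum, sum_ite_eq,
      if_pos (mem_erase.2 ⟨hi, mem_univ i⟩), if_neg hi]
    simp only [starMatrix, of_apply, if_neg hi, ↓reduceIte]
    ring

theorem sum_erase_starMatrix_mulVec (w e f p q : R) (v : ι → R) :
    ∑ i ∈ univ.erase c, (starMatrix c w e f p q *ᵥ v) i =
      (Fintype.card ι - 1 : R) * f * v c +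
        (p + (Fintype.card ι - 2 : R) * q) * ∑ j ∈ univ.erase c, v j := by
  have hrow : ∀ i ∈ univ.erase c, (starMatrix c w e f p q *ᵥ v) i =
      (f * v c + q * ∑ j ∈ univ.erase c, v j) + (p - q) * v i := fun i hi => by
    rw [starMatrix_mulVec, if_neg (ne_of_mem_erase hi)]
  rw [sum_congr rfl hrow, sum_add_distrib, sum_const, ← mul_sum, nsmul_eq_mul,
    cast_card_erase_of_mem (mem_univ c), card_univ]
  ring

theorem starMatrix_mul (w e f p q w' e' f' p' q' : R) :
    starMatrix c w e f p q * starMatrix c w' e' f' p' q' =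
      starMatrix c (w * w' + (Fintype.card ι - 1 : R) * e * f')
        (w * e' + e * (p' + (Fintype.card ι - 2 : R) * q'))
        (f * w' + (p + (Fintype.card ι - 2 : R) * q) * f')
        (p * p' + (Fintype.card ι - 2 : R) * q * q' + f * e')
        (p * q' + q * p' + (Fintype.card ι - 3 : R) * q * q' + f * e') := by
  refine Matrix.toLin'.injective (LinearMap.ext fun v => funext fun i => ?_)
  rw [toLin'_apply, toLin'_apply, ← mulVec_mulVec, starMatrix_mulVec,
    sum_erase_starMatrix_mulVec]
  by_cases hi : i = c
  · simp only [starMatrix_mulVec, if_pos hi, ↓reduceIte]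
    ring
  · simp only [starMatrix_mulVec, if_neg hi, ↓reduceIte]
    ring

variable {K : Type*} [Field K]

theorem Matrix.mem_spectrum_iff_exists_mulVec_eq_smul {A : Matrix ι ι K} {μ : K} :
    μ ∈ spectrum K A ↔ ∃ v ≠ 0, A *ᵥ v = μ • v := by
  rw [← spectrum_toLin', ← Module.End.hasEigenvalue_iff_mem_spectrum]
  constructor
  · intro h
    obtain ⟨v, hv, hv0⟩ := h.exists_hasEigenvector
    exact ⟨v, hv0, by simpa using Module.End.mem_eigenspace_iff.1 hv⟩
  · rintro ⟨v, hv0, hv⟩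
    exact Module.End.hasEigenvalue_of_hasEigenvector
      ⟨Module.End.mem_eigenspace_iff.2 (by simpa using hv), hv0⟩

theorem eq_sub_or_quadratic_of_mem_spectrum_starMatrix {w e f p q μ : K}
    (hμ : μ ∈ spectrum K (starMatrix c w e f p q)) :
    μ = p - q ∨ (μ - w) * (μ - (p + (Fintype.card ι - 2 : K) * q)) =
      (Fintype.card ι - 1 : K) * e * f := by
  obtain ⟨v, hv0, hv⟩ := Matrix.mem_spectrum_iff_exists_mulVec_eq_smul.1 hμ
  set S := ∑ j ∈ univ.erase c, v j
  have hc : w * v c + e * S = μ * v c := by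
    have h := congrFun hv c
    rwa [starMatrix_mulVec, if_pos rfl] at h
  have hS : (Fintype.card ι - 1 : K) * f * v c + (p + (Fintype.card ι - 2 : K) * q) * S =
      μ * S := by
    rw [← sum_erase_starMatrix_mulVec, hv, mul_sum]
    rfl
  by_cases hzero : v c = 0 ∧ S = 0
  · left
    obtain ⟨i, hi⟩ := Function.ne_iff.1 hv0
    have hic : i ≠ c := by rintro rfl; exact hi hzero.1
    have h : f * v c + q * S + (p - q) * v i = μ * v i := by
      have h := congrFun hv i
      rwa [starMatrix_mulVec, if_neg hic] at h
    rw [hzero.1, hzero.2] at h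
    exact (mul_right_cancel₀ hi (by linear_combination h)).symm
  · right
    rw [← sub_eq_zero]
    by_contra hdet
    refine hzero ⟨(mul_eq_zero.1 ?_).resolve_left hdet, (mul_eq_zero.1 ?_).resolve_left hdet⟩
    · linear_combination (p + (Fintype.card ι - 2 : K) * q - μ) * hc - e * hS
    · linear_combination -(Fintype.card ι - 1 : K) * f * hc - (μ - w) * hS

theorem mem_spectrum_starMatrix_of_quadratic [Nontrivial ι] {w e f p q μ : K} (hf : f ≠ 0)
    (hμ : (μ - w) * (μ - (p + (Fintype.card ι - 2 : K) * q)) =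
      (Fintype.card ι - 1 : K) * e * f) :
    μ ∈ spectrum K (starMatrix c w e f p q) := by
  set v : ι → K := fun i => if i = c then μ - (p + (Fintype.card ι - 2 : K) * q) else f
  have hS : ∑ j ∈ univ.erase c, v j = (Fintype.card ι - 1 : K) * f := by
    rw [sum_congr rfl fun j hj => if_neg (ne_of_mem_erase hj), sum_const, nsmul_eq_mul,
      cast_card_erase_of_mem (mem_univ c), card_univ]
  obtain ⟨i, hi⟩ := exists_ne c
  refine Matrix.mem_spectrum_iff_exists_mulVec_eq_smul.2 ⟨v, fun h => hf ?_, funext fun j => ?_⟩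
  · simpa [v, hi] using congrFun h i
  · rw [starMatrix_mulVec, hS, Pi.smul_apply, smul_eq_mul]
    by_cases hj : j = c
    · simp only [hj, v, ↓reduceIte]
      linear_combination -hμ
    · simp only [hj, v, ↓reduceIte]
      ring

end StarMatrix

theorem abs_lt_one_of_quadratic_eq_zero {t d μ : ℝ} (hμ : μ ^ 2 - t * μ + d = 0)
    (hd : |d| < 1) (h₁ : 0 < 1 - t + d) (h₂ : 0 < 1 + t + d) : |μ| < 1 := by
  have h₁' : 0 < (1 - μ) * (1 - (t - μ)) := by linear_combination h₁ + hμ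
  have h₂' : 0 < (1 + μ) * (1 + (t - μ)) := by linear_combination h₂ + hμ
  have hd' : |μ * (t - μ)| < 1 := by rwa [show μ * (t - μ) = d by linear_combination -hμ]
  rw [abs_lt] at hd' ⊢
  constructor <;> by_contra! h <;> nlinarith

theorem exists_one_lt_quadratic_eq_zero {t d : ℝ} (h : 1 - t + d < 0) :
    ∃ μ, 1 < μ ∧ μ ^ 2 - t * μ + d = 0 := by
  have hdisc : (t - 2) ^ 2 < t ^ 2 - 4 * d := by linarith
  set δ := √(t ^ 2 - 4 * d)
  have hδ : δ ^ 2 = t ^ 2 - 4 * d := Real.sq_sqrt (by nlinarith)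
  have hδ' : |t - 2| < δ := (Real.lt_sqrt (abs_nonneg _)).2 (by rwa [sq_abs])
  refine ⟨(t + δ) / 2, ?_, by linear_combination hδ / 4⟩
  linarith [neg_abs_le (t - 2)]

section Threshold

variable {m s A B : ℝ}

theorem abs_sub_one_div_mul (hm : 0 < m) : |s - 1 / m| * m = |m * s - 1| := by
  rw [← abs_of_pos hm, ← abs_mul, abs_of_pos hm, sub_mul, one_div_mul_cancel hm.ne', mul_comm]

theorem abs_sub_one_div_lt_one_div_mul_sqrt_iff (hm : 0 < m) (hB : 0 < B) :
    |s - 1 / m| < 1 / m * √(A / B) ↔ B * (m * s - 1) ^ 2 < A := by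
  rw [one_div_mul_eq_div, lt_div_iff₀ hm, abs_sub_one_div_mul hm, Real.lt_sqrt (abs_nonneg _),
    sq_abs, lt_div_iff₀ hB, mul_comm]

theorem one_div_mul_sqrt_lt_abs_sub_one_div_iff (hm : 0 < m) (hB : 0 < B) (hA : 0 ≤ A) :
    1 / m * √(A / B) < |s - 1 / m| ↔ A < B * (m * s - 1) ^ 2 := by
  rw [one_div_mul_eq_div, div_lt_iff₀ hm, abs_sub_one_div_mul hm, ← Real.sqrt_sq_eq_abs,
    Real.sqrt_lt_sqrt_iff (div_nonneg hA hB.le), div_lt_iff₀ hB, mul_comm]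

end Threshold

section StarBackground

variable {M : ℕ} {c : Fin M}

theorem ngm_eq_smul_mul_diagonal_mul_transpose (β : Fin M → ℝ) (γ : ℝ)
    (φ : Matrix (Fin M) (Fin M) ℝ) : ngm M β γ φ = (1 / γ) • (φ * diagonal β * φᵀ) := by
  ext i k
  simp [ngm, mul_apply, diagonal_apply, mul_comm]

theorem sbFlux_eq_starMatrix (hc : (c : ℕ) = M - 1) (s b : ℝ) :
    sbFlux M s b = starMatrix c (1 - (M - 1) * s) s s (1 - s - (M - 2) * b) b := by
  have hcenter : ∀ i : Fin M, (i : ℕ) = M - 1 ↔ i = c := fun i => by rw [← hc, Fin.val_inj]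
  ext i k
  by_cases hi : i = c <;> by_cases hk : k = c <;> by_cases hik : i = k <;>
    simp_all [sbFlux, starMatrix]

theorem starBeta_eq_ite (hc : (c : ℕ) = M - 1) (β0 ζ : ℝ) :
    starBeta M β0 ζ = fun i => if i = c then ζ * β0 else β0 := by
  funext i
  simp only [starBeta, ← hc, Fin.val_inj]

def sbCenterEntry (M : ℕ) (ζ s : ℝ) : ℝ := ζ * (1 - (M - 1) * s) ^ 2 + (M - 1) * s ^ 2

def sbCrossEntry (M : ℕ) (ζ s : ℝ) : ℝ := s * (ζ * (1 - (M - 1) * s) + 1 - s)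

def sbOuterRowSum (M : ℕ) (ζ s : ℝ) : ℝ := (1 - s) ^ 2 + (M - 1) * ζ * s ^ 2

theorem exists_ngm_starBackground_eq_starMatrix (hc : (c : ℕ) = M - 1) (β0 γ ζ s b : ℝ) :
    ∃ p q, ngm M (starBeta M β0 ζ) γ (sbFlux M s b) =
        starMatrix c (β0 / γ * sbCenterEntry M ζ s) (β0 / γ * sbCrossEntry M ζ s)
          (β0 / γ * sbCrossEntry M ζ s) p q ∧
      p - q = β0 / γ * (1 - s - (M - 1) * b) ^ 2 ∧
      p + (M - 2) * q = β0 / γ * sbOuterRowSum M ζ s := by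
  refine ⟨β0 / γ * ((1 - s - (M - 2) * b) ^ 2 + (M - 2) * b ^ 2 + ζ * s ^ 2),
    β0 / γ * (2 * (1 - s - (M - 2) * b) * b + (M - 3) * b ^ 2 + ζ * s ^ 2), ?_, by ring,
    by rw [sbOuterRowSum]; ring⟩
  rw [ngm_eq_smul_mul_diagonal_mul_transpose, sbFlux_eq_starMatrix hc, starBeta_eq_ite hc,
    diagonal_ite_eq_starMatrix, starMatrix_transpose, starMatrix_mul, starMatrix_mul,
    smul_starMatrix]
  congr 1 <;> simp only [sbCenterEntry, sbCrossEntry, Fintype.card_fin] <;> ring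

end StarBackground

section QuotientCharpoly

variable {M : ℕ} {r ζ s : ℝ}

def sbQuotientCharpoly (M : ℕ) (r ζ s μ : ℝ) : ℝ :=
  (μ - r * sbCenterEntry M ζ s) * (μ - r * sbOuterRowSum M ζ s) -
    (M - 1) * (r * sbCrossEntry M ζ s) * (r * sbCrossEntry M ζ s)

theorem sbQuotientCharpoly_eq (μ : ℝ) :
    sbQuotientCharpoly M r ζ s μ =
      μ ^ 2 - r * (sbCenterEntry M ζ s + sbOuterRowSum M ζ s) * μ +
        r ^ 2 * ζ * (M * s - 1) ^ 2 := by
  simp only [sbQuotientCharpoly, sbCenterEntry, sbOuterRowSum, sbCrossEntry]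
  ring

theorem mul_sbQuotientCharpoly_one :
    M * sbQuotientCharpoly M r ζ s 1 =
      (M * (1 - r) - r * (ζ - 1)) - r * (M * ζ * (1 - r) - (ζ - 1)) * (M * s - 1) ^ 2 := by
  simp only [sbQuotientCharpoly, sbCenterEntry, sbOuterRowSum, sbCrossEntry]
  ring

theorem exists_one_lt_sbQuotientCharpoly_eq_zero
    (h : M * (1 - r) - r * (ζ - 1) < r * (M * ζ * (1 - r) - (ζ - 1)) * (M * s - 1) ^ 2) :
    ∃ μ, 1 < μ ∧ sbQuotientCharpoly M r ζ s μ = 0 := by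
  have h₁ : sbQuotientCharpoly M r ζ s 1 < 0 := by
    nlinarith [mul_sbQuotientCharpoly_one (M := M) (r := r) (ζ := ζ) (s := s),
      (Nat.cast_nonneg M : (0 : ℝ) ≤ M)]
  rw [sbQuotientCharpoly_eq] at h₁
  simp only [sbQuotientCharpoly_eq]
  exact exists_one_lt_quadratic_eq_zero (by linarith)

theorem abs_lt_one_of_sbQuotientCharpoly_eq_zero {μ : ℝ} (hM : 0 < M) (hr₀ : 0 < r) (hr₁ : r < 1)
    (hζr : 1 < ζ * r) (hA₂ : 0 < M * ζ * (1 - r) - (ζ - 1))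
    (h : r * (M * ζ * (1 - r) - (ζ - 1)) * (M * s - 1) ^ 2 < M * (1 - r) - r * (ζ - 1))
    (hμ : sbQuotientCharpoly M r ζ s μ = 0) : |μ| < 1 := by
  have hζ : 0 < ζ := pos_of_mul_pos_left (one_pos.trans hζr) hr₀.le
  have hA₀ : 0 < M * (1 - r) - r * (ζ - 1) :=
    lt_of_le_of_lt (mul_nonneg (mul_pos hr₀ hA₂).le (sq_nonneg _)) h
  have h₁ : 0 < sbQuotientCharpoly M r ζ s 1 := by
    nlinarith [mul_sbQuotientCharpoly_one (M := M) (r := r) (ζ := ζ) (s := s),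
      (Nat.cast_nonneg M : (0 : ℝ) ≤ M)]
  have htrace : 0 ≤ r * (sbCenterEntry M ζ s + sbOuterRowSum M ζ s) := by
    have : 0 ≤ (M - 1 : ℝ) := sub_nonneg.2 (Nat.one_le_cast.2 hM)
    unfold sbCenterEntry sbOuterRowSum
    positivity
  have hdet : r ^ 2 * ζ * (M * s - 1) ^ 2 < 1 := by
    -- `ζ r A₀ < A₂` since `A₂ - ζ r A₀ = ζ (1 - r) A₀ + (ζ - 1)(ζ r - 1)`
    have hζ₁ : 1 < ζ := by nlinarith
    nlinarith [mul_pos (mul_pos hζ (by linarith : 0 < 1 - r)) hA₀,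
      mul_pos (by linarith : 0 < ζ - 1) (by linarith : 0 < ζ * r - 1),
      mul_lt_mul_of_pos_left h (mul_pos hζ hr₀)]
  rw [sbQuotientCharpoly_eq] at h₁ hμ
  refine abs_lt_one_of_quadratic_eq_zero hμ ?_ (by linarith) (by positivity)
  rw [abs_of_nonneg (by positivity)]
  exact hdet

end QuotientCharpoly

theorem sbCrossEntry_pos {M : ℕ} {ζ s : ℝ} (hM : 3 ≤ M) (hs₀ : 0 < s) (hs₁ : s ≤ 1 / (M - 1))
    (hζ : 0 ≤ ζ) : 0 < sbCrossEntry M ζ s := by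
  have hM₃ : (3 : ℝ) ≤ M := by exact_mod_cast hM
  have hd : s * (M - 1) ≤ 1 := (le_div_iff₀ (by linarith)).1 hs₁
  have h₁ : 0 < s * (1 - s) := mul_pos hs₀ (by nlinarith)
  have h₂ : 0 ≤ s * (ζ * (1 - (M - 1) * s)) := mul_nonneg hs₀.le (mul_nonneg hζ (by linarith))
  unfold sbCrossEntry
  linarith

theorem abs_outerEigenvalue_lt_one {M : ℕ} {r s b : ℝ} (hM : 3 ≤ M) (hr₀ : 0 < r) (hr₁ : r < 1)
    (hb : 0 < b) (hsb : s + (M - 2) * b < 1) (hs : 0 < s) :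
    |r * (1 - s - (M - 1) * b) ^ 2| < 1 := by
  have hM₃ : (3 : ℝ) ≤ M := by exact_mod_cast hM
  have hX : (1 - s - (M - 1) * b) ^ 2 < 1 :=
    (sq_lt_one_iff_abs_lt_one _).2 (abs_lt.2 ⟨by nlinarith, by nlinarith⟩)
  rw [abs_of_nonneg (by positivity)]
  nlinarith

theorem starBackground_ngm_DFE (M : ℕ) (hM : 3 ≤ M) (β0 γ ζ φ0 φ1 : ℝ)
    (hβ0 : 0 < β0) (hβγ : β0 < γ)
    (hφ1 : 0 < φ1) (hφsum : φ0 + ((M : ℝ) - 2) * φ1 < 1)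
    (hφlo : 0 < φ0) (hφhi : φ0 ≤ 1 / ((M : ℝ) - 1))
    (hζlo : γ / β0 < ζ)
    (hζhi : ζ < 1 + (M : ℝ) * (1 - β0 / γ) / (β0 / γ)) :
    (|φ0 - 1 / (M : ℝ)| <
        (1 / (M : ℝ)) * Real.sqrt
          (((M : ℝ) * (1 - β0 / γ) - (β0 / γ) * (ζ - 1)) /
            ((β0 / γ) * ((M : ℝ) * ζ * (1 - β0 / γ) - (ζ - 1)))) →
      ∀ μ ∈ spectrum ℝ (ngm M (starBeta M β0 ζ) γ (sbFlux M φ0 φ1)),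
        |μ| < 1) ∧
    ((1 / (M : ℝ)) * Real.sqrt
          (((M : ℝ) * (1 - β0 / γ) - (β0 / γ) * (ζ - 1)) /
            ((β0 / γ) * ((M : ℝ) * ζ * (1 - β0 / γ) - (ζ - 1))))
        < |φ0 - 1 / (M : ℝ)| →
      ∃ μ ∈ spectrum ℝ (ngm M (starBeta M β0 ζ) γ (sbFlux M φ0 φ1)),
        1 < μ) := by
  obtain ⟨c, hc⟩ : ∃ c : Fin M, (c : ℕ) = M - 1 := ⟨⟨M - 1, by omega⟩, rfl⟩
  obtain ⟨p, q, hκ, hpq, hpq'⟩ := exists_ngm_starBackground_eq_starMatrix hc β0 γ ζ φ0 φ1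
  have hγ : 0 < γ := hβ0.trans hβγ
  set r := β0 / γ with hr
  have hr₀ : 0 < r := div_pos hβ0 hγ
  have hr₁ : r < 1 := (div_lt_one hγ).2 hβγ
  have hζr : 1 < ζ * r := by rwa [hr, ← mul_div_assoc, one_lt_div hγ, ← div_lt_iff₀ hβ0]
  have hA₀ : 0 < M * (1 - r) - r * (ζ - 1) := by
    linarith [(lt_div_iff₀ hr₀).1 (sub_lt_iff_lt_add'.2 hζhi)]
  -- `r A₂ = M (1 - r)(ζ r - 1) + A₀`
  have hA₂ : 0 < M * ζ * (1 - r) - (ζ - 1) := by nlinarith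
  have hM₀ : (0 : ℝ) < M := by positivity
  rw [hκ, abs_sub_one_div_lt_one_div_mul_sqrt_iff hM₀ (mul_pos hr₀ hA₂),
    one_div_mul_sqrt_lt_abs_sub_one_div_iff hM₀ (mul_pos hr₀ hA₂) hA₀.le]
  refine ⟨fun h μ hμ => ?_, fun h => ?_⟩
  · rcases eq_sub_or_quadratic_of_mem_spectrum_starMatrix hμ with rfl | hμ
    · exact hpq ▸ abs_outerEigenvalue_lt_one hM hr₀ hr₁ hφ1 hφsum hφlo
    · rw [Fintype.card_fin, hpq'] at hμ
      exact abs_lt_one_of_sbQuotientCharpoly_eq_zero (by omega) hr₀ hr₁ hζr hA₂ h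
        (sub_eq_zero.2 hμ)
  · obtain ⟨μ, hμ₁, hμ⟩ := exists_one_lt_sbQuotientCharpoly_eq_zero h
    have : Nontrivial (Fin M) := Fin.nontrivial_iff_two_le.2 (by omega)
    have hE := sbCrossEntry_pos hM hφlo hφhi (pos_of_mul_pos_left (one_pos.trans hζr) hr₀.le).le
    refine ⟨μ, mem_spectrum_starMatrix_of_quadratic (mul_pos hr₀ hE).ne' ?_, hμ₁⟩
    rw [Fintype.card_fin, hpq']
    exact sub_eq_zero.1 hμ
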